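/- Suppose the binary relation ≻ on F satisfies Axioms 1–7. Define f ∼_p g iff neither f ≻_p g nor g ≻_p f, and f ∼_o g iff neither f ≻_o g nor g ≻_o f. Then: (ambiguity aversion of the pessimistic self) for all f, g ∈ F with f ∼_p g and all α ∈ (0,1), it is not the case that f ≻_p αf+(1-α)g; and (ambiguity love of the optimistic self) for all f, g ∈ F with f ∼_o g and all α ∈ (0,1), it is not the case that αf+(1-α)g ≻_o f. -/
import Mathlib


/-!
Framework: Anscombe–Aumann acts, finitely additive probability measures,
simple acts, hope-and-prepare preferences (Bastianello–Hill style setup).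
-/

open Set

section Framework

variable (S : Type*) [MeasurableSpace S]

/-- The measurable sets (events) of `S`, as a subtype. -/
abbrev MSet := {A : Set S // MeasurableSet A}

/-- Finitely additive probability measures on `(S, Σ)`, viewed as real-valued
set functions on events.  The weak* topology is the topology of pointwise
convergence on events, i.e. the product topology on `MSet S → ℝ`. -/
def ProbCharges : Set (MSet S → ℝ) :=
  {p | (∀ A, 0 ≤ p A) ∧ p ⟨Set.univ, MeasurableSet.univ⟩ = 1 ∧
    ∀ A B : MSet S, Disjoint A.1 B.1 → p ⟨A.1 ∪ B.1, A.2.union B.2⟩ = p A + p B}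

end Framework

section Fns

variable {S : Type*} [MeasurableSpace S]

/-- `φ : S → ℝ` is a measurable simple function (an element of `B₀(Σ)`). -/
def IsSimpleFn (φ : S → ℝ) : Prop :=
  (Set.range φ).Finite ∧ ∀ y : ℝ, MeasurableSet (φ ⁻¹' {y})

/-- The integral `∫ φ dp` of a simple function `φ` against a finitely additive
measure `p` (junk value `0` if `φ` is not simple). -/
noncomputable def fInt (p : MSet S → ℝ) (φ : S → ℝ) : ℝ :=
  @dite _ (IsSimpleFn φ) (Classical.dec _)
    (fun h => ∑ y ∈ h.1.toFinset, y * p ⟨φ ⁻¹' {y}, h.2 y⟩) (fun _ => 0)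

/-- A functional `I : B₀(Σ) → ℝ` is monotonic. -/
def MonotonicFn (I : (S → ℝ) → ℝ) : Prop :=
  ∀ φ ψ, IsSimpleFn φ → IsSimpleFn ψ → (∀ s, φ s ≤ ψ s) → I φ ≤ I ψ

/-- A functional `I : B₀(Σ) → ℝ` is constant-linear: `I(aφ + b) = a I(φ) + b`
for `a ≥ 0`, `b ∈ ℝ`. -/
def ConstLinearFn (I : (S → ℝ) → ℝ) : Prop :=
  ∀ φ, IsSimpleFn φ → ∀ a : ℝ, 0 ≤ a → ∀ b : ℝ,
    I (fun s => a * φ s + b) = a * I φ + b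

end Fns

section Acts

variable {S : Type*} [MeasurableSpace S] {V : Type*} [AddCommGroup V] [Module ℝ V]

/-- `f : S → V` is a simple act with outcomes in `X`: it is `X`-valued,
takes finitely many values and is `Σ`-measurable. -/
def IsAct (X : Set V) (f : S → V) : Prop :=
  (∀ s, f s ∈ X) ∧ (Set.range f).Finite ∧ ∀ v : V, MeasurableSet (f ⁻¹' {v})

/-- Pointwise mixture `αf + (1-α)g` of two acts. -/
def mixAct (α : ℝ) (f g : S → V) : S → V := fun s => α • f s + (1 - α) • g s

/-- The constant act with outcome `x`. -/
def constAct (S : Type*) {V : Type*} (x : V) : S → V := fun _ => x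

/-- `u : V → ℝ` is affine on the convex set `X`. -/
def IsAffineOn (u : V → ℝ) (X : Set V) : Prop :=
  ∀ x ∈ X, ∀ y ∈ X, ∀ α : ℝ, 0 ≤ α → α ≤ 1 →
    u (α • x + (1 - α) • y) = α * u x + (1 - α) * u y

/-- `u` is non-constant on `X`. -/
def NonConstOn (u : V → ℝ) (X : Set V) : Prop := ∃ x ∈ X, ∃ y ∈ X, u x ≠ u y

/-- Expected utility `∫ u(f) dp` of the act `f` under the measure `p`. -/
noncomputable def EU (u : V → ℝ) (f : S → V) (p : MSet S → ℝ) : ℝ :=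
  fInt p (fun s => u (f s))

/-- Worst-case expected utility of `f` over the set of scenarios `C`. -/
noncomputable def minEU (u : V → ℝ) (C : Set (MSet S → ℝ)) (f : S → V) : ℝ :=
  sInf (EU u f '' C)

/-- Best-case expected utility of `f` over the set of scenarios `D`. -/
noncomputable def maxEU (u : V → ℝ) (D : Set (MSet S → ℝ)) (f : S → V) : ℝ :=
  sSup (EU u f '' D)

/-- `f` and `g` are incomparable (`f ⋈ g`). -/
def Incomp (R : (S → V) → (S → V) → Prop) (f g : S → V) : Prop := ¬ R f g ∧ ¬ R g f

end Acts

section Axioms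

variable {S : Type*} [MeasurableSpace S] {V : Type*} [AddCommGroup V] [Module ℝ V]
variable (X : Set V) (R : (S → V) → (S → V) → Prop)

/-- Axiom 1: `≻` is asymmetric and transitive on acts, and its restriction to
constant acts is non-trivial and negatively transitive. -/
def PrefAx1 : Prop :=
  (∀ f g, IsAct X f → IsAct X g → R f g → ¬ R g f) ∧
  (∀ f g h, IsAct X f → IsAct X g → IsAct X h → R f g → R g h → R f h) ∧
  (∃ x ∈ X, ∃ y ∈ X, R (constAct S x) (constAct S y)) ∧
  (∀ x ∈ X, ∀ y ∈ X, ∀ z ∈ X, ¬ R (constAct S x) (constAct S y) →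
    ¬ R (constAct S y) (constAct S z) → ¬ R (constAct S x) (constAct S z))

/-- Axiom 2 (continuity). -/
def PrefAx2 : Prop :=
  ∀ f g h, IsAct X f → IsAct X g → IsAct X h →
    IsOpen {α : Set.Icc (0 : ℝ) 1 | R (mixAct (α : ℝ) f g) h} ∧
    IsOpen {α : Set.Icc (0 : ℝ) 1 | R h (mixAct (α : ℝ) f g)}

/-- Axiom 3 (certainty independence). -/
def PrefAx3 : Prop :=
  ∀ f g, IsAct X f → IsAct X g → ∀ x ∈ X, ∀ α : ℝ, 0 < α → α < 1 →
    (R f g ↔ R (mixAct α f (constAct S x)) (mixAct α g (constAct S x)))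

/-- Axiom 4: for any outcome `x`, the upper and lower contour sets at the
constant act `x` are convex. -/
def PrefAx4 : Prop :=
  ∀ x ∈ X,
    (∀ f g, IsAct X f → IsAct X g → R f (constAct S x) → R g (constAct S x) →
      ∀ α : ℝ, 0 ≤ α → α ≤ 1 → R (mixAct α f g) (constAct S x)) ∧
    (∀ f g, IsAct X f → IsAct X g → R (constAct S x) f → R (constAct S x) g →
      ∀ α : ℝ, 0 ≤ α → α ≤ 1 → R (constAct S x) (mixAct α f g))

/-- Axiom 5 (monotonicity). -/
def PrefAx5 : Prop :=
  ∀ f g, IsAct X f → IsAct X g →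
    (∀ s : S, R (constAct S (f s)) (constAct S (g s))) → R f g

/-- Axiom 6: if every outcome incomparable to `f` is incomparable to `g`,
then `f` and `g` are incomparable. -/
def PrefAx6 : Prop :=
  ∀ f g, IsAct X f → IsAct X g →
    (∀ x ∈ X, Incomp R f (constAct S x) → Incomp R g (constAct S x)) → Incomp R f g

/-- Axiom 7: if `f ⋈ x`, `x ≻ g`, `g ⋈ y` and `f ≻ y`, then `f ≻ g`. -/
def PrefAx7 : Prop :=
  ∀ f g, IsAct X f → IsAct X g → ∀ x ∈ X, ∀ y ∈ X,
    Incomp R f (constAct S x) → R (constAct S x) g →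
    Incomp R g (constAct S y) → R f (constAct S y) → R f g

end Axioms

section Reps

variable {S : Type*} [MeasurableSpace S] {V : Type*} [AddCommGroup V] [Module ℝ V]

/-- `(u, C, D)` is a hope-and-prepare representation of `R`. -/
def IsHPRep (X : Set V) (R : (S → V) → (S → V) → Prop) (u : V → ℝ)
    (C D : Set (MSet S → ℝ)) : Prop :=
  IsAffineOn u X ∧ NonConstOn u X ∧
  C.Nonempty ∧ D.Nonempty ∧ C ⊆ ProbCharges S ∧ D ⊆ ProbCharges S ∧
  IsCompact C ∧ IsCompact D ∧ Convex ℝ C ∧ Convex ℝ D ∧ (C ∩ D).Nonempty ∧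
  ∀ f g, IsAct X f → IsAct X g →
    (R f g ↔ (minEU u C g < minEU u C f ∧ maxEU u D g < maxEU u D f))

/-- `(u, C)` is a Bewley representation of `R`. -/
def IsBewleyRep (X : Set V) (R : (S → V) → (S → V) → Prop) (u : V → ℝ)
    (C : Set (MSet S → ℝ)) : Prop :=
  IsAffineOn u X ∧ NonConstOn u X ∧
  C.Nonempty ∧ C ⊆ ProbCharges S ∧ IsCompact C ∧ Convex ℝ C ∧
  ∀ f g, IsAct X f → IsAct X g → (R f g ↔ ∀ p ∈ C, EU u g p < EU u f p)

/-- `(u, C, D)` is a twofold multi-prior representation of `R`. -/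
def IsTwofoldRep (X : Set V) (R : (S → V) → (S → V) → Prop) (u : V → ℝ)
    (C D : Set (MSet S → ℝ)) : Prop :=
  IsAffineOn u X ∧ NonConstOn u X ∧
  C.Nonempty ∧ D.Nonempty ∧ C ⊆ ProbCharges S ∧ D ⊆ ProbCharges S ∧
  IsCompact C ∧ IsCompact D ∧ Convex ℝ C ∧ Convex ℝ D ∧ (C ∩ D).Nonempty ∧
  ∀ f g, IsAct X f → IsAct X g → (R f g ↔ maxEU u D g < minEU u C f)

end Reps

section Statement

variable {S : Type*} [MeasurableSpace S] [Nonempty S]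
variable {V : Type*} [AddCommGroup V] [Module ℝ V]

/-- The derived pessimistic relation: `g ≻_p f` iff there is an outcome `x`
with `g ≻ x` and `x ⋈ f`. -/
def PessRel (X : Set V) (R : (S → V) → (S → V) → Prop) (g f : S → V) : Prop :=
  ∃ x ∈ X, R g (constAct S x) ∧ Incomp R (constAct S x) f

/-- The derived optimistic relation: `g ≻_o f` iff there is an outcome `x`
with `x ⋈ g` and `x ≻ f`. -/
def OptRel (X : Set V) (R : (S → V) → (S → V) → Prop) (g f : S → V) : Prop :=
  ∃ x ∈ X, Incomp R (constAct S x) g ∧ R (constAct S x) f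

private lemma constAct_isAct {S : Type*} [MeasurableSpace S] {V : Type*}
    [AddCommGroup V] [Module ℝ V] {X : Set V} {x : V} (hx : x ∈ X) :
    IsAct X (constAct S x) := by
  refine ⟨fun _ => hx, (Set.finite_singleton x).subset ?_, fun v => ?_⟩
  · rintro _ ⟨s, rfl⟩; simp [constAct]
  · by_cases h : x = v
    · convert MeasurableSet.univ using 1
      ext s; simp [constAct, h]
    · convert MeasurableSet.empty using 1
      ext s; simp [constAct, h]

/-- Step 4: under Axioms 1–7, the pessimistic self is
ambiguity averse and the optimistic self is ambiguity loving: if `f ∼_p g`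
then `¬ (f ≻_p αf+(1-α)g)`, and if `f ∼_o g` then `¬ (αf+(1-α)g ≻_o f)`,
for all `α ∈ (0,1)`. -/
theorem statement17 (X : Set V) (hX : Convex ℝ X) (hX2 : ∃ x ∈ X, ∃ y ∈ X, x ≠ y)
    (R : (S → V) → (S → V) → Prop)
    (hax : PrefAx1 X R ∧ PrefAx2 X R ∧ PrefAx3 X R ∧ PrefAx4 X R ∧ PrefAx5 X R ∧
      PrefAx6 X R ∧ PrefAx7 X R) :
    (∀ f g, IsAct X f → IsAct X g →
      (¬ PessRel X R f g ∧ ¬ PessRel X R g f) →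
      ∀ α : ℝ, 0 < α → α < 1 → ¬ PessRel X R f (mixAct α f g)) ∧
    (∀ f g, IsAct X f → IsAct X g →
      (¬ OptRel X R f g ∧ ¬ OptRel X R g f) →
      ∀ α : ℝ, 0 < α → α < 1 → ¬ OptRel X R (mixAct α f g) f) := by
  obtain ⟨hax1, hax2, hax3, hax4, hax5, hax6, hax7⟩ := hax
  obtain ⟨hasym, htrans, -, -⟩ := hax1
  constructor
  · -- pessimistic part
    rintro f g hf hg ⟨hfg, hgf⟩ α hα0 hα1 hP
    obtain ⟨x, hxX, hfx, hxm⟩ := hP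
    have hxm1 : ¬ R (constAct S x) (mixAct α f g) := hxm.1
    have hxm2 : ¬ R (mixAct α f g) (constAct S x) := hxm.2
    have hxact : IsAct X (constAct S x) := constAct_isAct hxX
    by_cases hxg : R (constAct S x) g
    · -- case x ≻ g : use Axiom 6 to get f ⋈ g, contradicting f ≻ g
      have key : ∀ y ∈ X, Incomp R g (constAct S y) → Incomp R f (constAct S y) := by
        intro y hyX hyinc
        have hgy : ¬ R g (constAct S y) := hyinc.1
        have hyg : ¬ R (constAct S y) g := hyinc.2
        have hyact : IsAct X (constAct S y) := constAct_isAct hyX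
        constructor
        · intro hfy
          exact hfg ⟨y, hyX, hfy, hyg, hgy⟩
        · intro hyf
          have hyx : R (constAct S y) (constAct S x) :=
            htrans _ _ _ hyact hf hxact hyf hfx
          exact hyg (htrans _ _ _ hyact hxact hg hyx hxg)
      have hinc : Incomp R g f := hax6 g f hg hf key
      exact hinc.2 (htrans f (constAct S x) g hf hxact hg hfx hxg)
    · -- then g ≻ x : Axiom 4 gives m ≻ x, contradicting x ⋈ m
      have hgx : R g (constAct S x) := by
        by_contra hgx
        exact hfg ⟨x, hxX, hfx, hxg, hgx⟩
      exact hxm2 ((hax4 x hxX).1 f g hf hg hfx hgx α hα0.le hα1.le)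
  · -- optimistic part
    rintro f g hf hg ⟨hfg, hgf⟩ α hα0 hα1 hP
    obtain ⟨x, hxX, hxm, hxf⟩ := hP
    have hxm1 : ¬ R (constAct S x) (mixAct α f g) := hxm.1
    have hxm2 : ¬ R (mixAct α f g) (constAct S x) := hxm.2
    have hxact : IsAct X (constAct S x) := constAct_isAct hxX
    by_cases hgx : R g (constAct S x)
    · -- case g ≻ x : use Axiom 6 to get g ⋈ f, contradicting g ≻ f
      have key : ∀ y ∈ X, Incomp R g (constAct S y) → Incomp R f (constAct S y) := by
        intro y hyX hyinc
        have hgy : ¬ R g (constAct S y) := hyinc.1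
        have hyg : ¬ R (constAct S y) g := hyinc.2
        have hyact : IsAct X (constAct S y) := constAct_isAct hyX
        constructor
        · intro hfy
          have hxy : R (constAct S x) (constAct S y) :=
            htrans _ _ _ hxact hf hyact hxf hfy
          exact hgy (htrans _ _ _ hg hxact hyact hgx hxy)
        · intro hyf
          exact hgf ⟨y, hyX, ⟨hyg, hgy⟩, hyf⟩
      have hinc : Incomp R g f := hax6 g f hg hf key
      exact hinc.1 (htrans g (constAct S x) f hg hxact hf hgx hxf)
    · -- then x ≻ g : Axiom 4 gives x ≻ m, contradicting x ⋈ m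
      have hxg : R (constAct S x) g := by
        by_contra hxg
        exact hgf ⟨x, hxX, ⟨hxg, hgx⟩, hxf⟩
      exact hxm1 ((hax4 x hxX).2 f g hf hg hxf hxg α hα0.le hα1.le)

end Statement
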